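/- If k is a field of characteristic not dividing 2n+1, then u = a_0 - (1/(2n+1))(a_0 + a_1 + ... + a_{2n}) is an idempotent of the quandle algebra k[C_{2n+1}] with augmentation 0. -/
import Mathlib


/-- Product on the quandle algebra k[C_{2n+1}]: a_i · a_j = a_{(n+1)(i+j)}. -/
def qr (n : ℕ) {k : Type*} [Field k] (u v : ZMod (2 * n + 1) → k) :
    ZMod (2 * n + 1) → k :=
  fun z => ∑ x, ∑ y,
    if ((n : ZMod (2 * n + 1)) + 1) * (x + y) = z then u x * v y else 0

/-- Basis element a_i. -/
def a (n : ℕ) (k : Type*) [Field k] (i : ZMod (2 * n + 1)) :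
    ZMod (2 * n + 1) → k :=
  fun z => if z = i then 1 else 0

/-- The element u = a_0 - (1/(2n+1))(a_0 + a_1 + ⋯ + a_{2n}). -/
def u (n : ℕ) (k : Type*) [Field k] : ZMod (2 * n + 1) → k :=
  a n k 0 - ((2 * n + 1 : ℕ) : k)⁻¹ • ∑ i, a n k i

lemma u_eq (n : ℕ) (k : Type*) [Field k] (z : ZMod (2 * n + 1)) :
    u n k z = (if z = 0 then 1 else 0) - ((2 * n + 1 : ℕ) : k)⁻¹ := by
  simp only [u, a, Pi.sub_apply, Pi.smul_apply, Finset.sum_apply, smul_eq_mul]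
  rw [Finset.sum_ite_eq]
  simp

lemma h2lem (n : ℕ) : ((n : ZMod (2 * n + 1)) + 1) * 2 = 1 := by
  have h : ((2 * n + 1 : ℕ) : ZMod (2 * n + 1)) = 0 := ZMod.natCast_self _
  push_cast at h
  linear_combination h

/-- If k is a field whose characteristic does not divide 2n+1, then
u = a_0 - (1/(2n+1))(a_0 + ⋯ + a_{2n}) is an idempotent of k[C_{2n+1}]
with augmentation 0. -/
theorem stmt17 (n : ℕ) {k : Type*} [Field k]
    (hchar : ¬ (ringChar k ∣ (2 * n + 1))) :
    qr n (u n k) (u n k) = u n k ∧ ∑ z, u n k z = 0 := by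
  set c : k := ((2 * n + 1 : ℕ) : k)⁻¹ with hc
  have hN : ((2 * n + 1 : ℕ) : k) ≠ 0 := fun h =>
    hchar ((CharP.cast_eq_zero_iff k (ringChar k) _).mp h)
  have hNc : ((2 * n + 1 : ℕ) : k) * c = 1 := mul_inv_cancel₀ hN
  have h2 := h2lem n
  constructor
  · funext z
    show (∑ x, ∑ y, if ((n : ZMod (2 * n + 1)) + 1) * (x + y) = z
        then u n k x * u n k y else 0) = u n k z
    have hinner : ∀ x : ZMod (2 * n + 1),
        (∑ y, if ((n : ZMod (2 * n + 1)) + 1) * (x + y) = z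
          then u n k x * u n k y else 0) = u n k x * u n k (2 * z - x) := by
      intro x
      have hcond : ∀ y : ZMod (2 * n + 1),
          (((n : ZMod (2 * n + 1)) + 1) * (x + y) = z) ↔ y = 2 * z - x := by
        intro y
        constructor
        · intro h; linear_combination 2 * h - (x + y) * h2
        · intro h; subst h; linear_combination z * h2
      rw [Finset.sum_congr rfl (fun y _ => if_congr (hcond y) rfl rfl),
        Finset.sum_ite_eq' Finset.univ (2 * z - x)]
      simp
    rw [Finset.sum_congr rfl (fun x _ => hinner x)]
    have hterm : ∀ x : ZMod (2 * n + 1),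
        u n k x * u n k (2 * z - x) =
        (if x = 0 then (1:k) else 0) * (if x = 2 * z then 1 else 0)
          - c * (if x = 2 * z then 1 else 0) - c * (if x = 0 then 1 else 0)
          + c * c := by
      intro x
      rw [u_eq, u_eq]
      have : (2 * z - x = 0) ↔ (x = 2 * z) := by
        constructor <;> intro h <;> linear_combination -h
      rw [if_congr this rfl rfl]
      ring
    rw [Finset.sum_congr rfl (fun x _ => hterm x), Finset.sum_add_distrib,
      Finset.sum_sub_distrib, Finset.sum_sub_distrib, ← Finset.mul_sum,
      ← Finset.mul_sum]
    have e1 : (∑ x : ZMod (2 * n + 1),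
        (if x = 0 then (1:k) else 0) * (if x = 2 * z then 1 else 0))
        = if (0 : ZMod (2 * n + 1)) = 2 * z then 1 else 0 := by
      simp only [ite_mul, one_mul, zero_mul]
      rw [Finset.sum_ite_eq' Finset.univ (0 : ZMod (2 * n + 1))]
      simp
    have e2 : (∑ x : ZMod (2 * n + 1), (if x = 2 * z then (1:k) else 0)) = 1 := by
      rw [Finset.sum_ite_eq' Finset.univ (2 * z)]; simp
    have e3 : (∑ x : ZMod (2 * n + 1), (if x = 0 then (1:k) else 0)) = 1 := by
      rw [Finset.sum_ite_eq' Finset.univ (0 : ZMod (2 * n + 1))]; simp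
    have e4 : (∑ _x : ZMod (2 * n + 1), c * c) = ((2 * n + 1 : ℕ) : k) * (c * c) := by
      rw [Finset.sum_const, Finset.card_univ, ZMod.card, nsmul_eq_mul]
    rw [e1, e2, e3, e4, u_eq]
    have hz : ((0 : ZMod (2 * n + 1)) = 2 * z) ↔ (z = 0) := by
      constructor
      · intro h; linear_combination -((n : ZMod (2 * n + 1)) + 1) * h - z * h2
      · intro h; subst h; ring
    rw [if_congr hz rfl rfl]
    by_cases hz0 : z = 0
    · simp only [hz0, if_pos rfl]; linear_combination c * hNc
    · simp only [if_neg hz0]; linear_combination c * hNc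
  · rw [Finset.sum_congr rfl (fun z _ => u_eq n k z), Finset.sum_sub_distrib,
      Finset.sum_ite_eq' Finset.univ (0 : ZMod (2 * n + 1)), Finset.sum_const,
      Finset.card_univ, ZMod.card, nsmul_eq_mul]
    simp only [Finset.mem_univ, if_true]
    linear_combination -hNc
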